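/- arXiv:1705.06775 — 4 statements merged into one kernel-verified Lean document; each statement's English description precedes it below -/
import Mathlib

section
/- For nonnegative integers n and m, the generating function of partitions with at most n parts, each part at most m, equals the Gaussian binomial coefficient: sum over partitions λ with m ≥ λ₁ ≥ … ≥ λ_n ≥ 0 of q^{|λ|} equals the q-binomial coefficient [n+m choose n]_q, where |λ| = λ₁ + … + λ_n. -/
/-!
Both sides satisfy the q-Pascal recurrence
`[n+m+2 choose n+1]_q = [n+m+1 choose n]_q + q^(n+1) [n+m+1 choose n+1]_q`
and equal `1` when `n = 0` or `m = 0`. For partitions with `n + 1` parts bounded by `m + 1`,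
split according to whether the last part vanishes: if it does, drop it; otherwise all parts
are positive, and subtracting `1` from each of them lowers `|λ|` by `n + 1` and the bound by `1`.
-/

/- `qq` plays the role of the formal variable `q`, as an element of the
field of rational functions over `ℚ`. -/
noncomputable def qq : RatFunc ℚ := RatFunc.X

/-- `(q)_n = ∏_{i=1}^n (1 - q^i)`. -/
noncomputable def qp (n : ℕ) : RatFunc ℚ := ∏ i ∈ Finset.range n, (1 - qq ^ (i + 1))

open Finset

lemma qq_pow_ne_one {k : ℕ} (hk : k ≠ 0) : qq ^ k ≠ 1 := by
  rw [qq, ← RatFunc.algebraMap_X, ← map_pow, ← map_one (algebraMap (Polynomial ℚ) (RatFunc ℚ)),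
    (RatFunc.algebraMap_injective ℚ).ne_iff]
  intro h
  simpa [hk] using congrArg Polynomial.natDegree h

lemma qp_ne_zero (n : ℕ) : qp n ≠ 0 :=
  prod_ne_zero_iff.2 fun i _ => sub_ne_zero.2 (qq_pow_ne_one i.succ_ne_zero).symm

lemma qp_succ (n : ℕ) : qp (n + 1) = qp n * (1 - qq ^ (n + 1)) :=
  prod_range_succ _ n

lemma qp_zero : qp 0 = 1 := prod_range_zero _

noncomputable def qBinomial (n m : ℕ) : RatFunc ℚ := qp (n + m) / (qp n * qp m)

lemma qBinomial_zero_left (m : ℕ) : qBinomial 0 m = 1 := by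
  rw [qBinomial, zero_add, qp_zero, one_mul, div_self (qp_ne_zero m)]

lemma qBinomial_zero_right (n : ℕ) : qBinomial n 0 = 1 := by
  rw [qBinomial, add_zero, qp_zero, mul_one, div_self (qp_ne_zero n)]

lemma qBinomial_succ_succ (n m : ℕ) :
    qBinomial (n + 1) (m + 1) = qBinomial n (m + 1) + qq ^ (n + 1) * qBinomial (n + 1) m := by
  have hn := qp_ne_zero n
  have hm := qp_ne_zero m
  have hn' := sub_ne_zero.2 (qq_pow_ne_one n.succ_ne_zero).symm
  have hm' := sub_ne_zero.2 (qq_pow_ne_one m.succ_ne_zero).symm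
  rw [qBinomial, qBinomial, qBinomial, show n + 1 + (m + 1) = n + m + 1 + 1 by ring,
    show n + (m + 1) = n + m + 1 by ring, show n + 1 + m = n + m + 1 by ring,
    qp_succ (n + m + 1), qp_succ n, qp_succ m]
  field_simp
  ring

lemma Antitone.snoc {α : Type*} [Preorder α] {n : ℕ} {l : Fin n → α} {a : α}
    (hl : Antitone l) (ha : ∀ i, a ≤ l i) : Antitone (Fin.snoc l a : Fin (n + 1) → α) := by
  intro i j hij
  induction j using Fin.lastCases with
  | last =>
    induction i using Fin.lastCases with
    | last => exact le_rfl
    | cast i => simpa using ha i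
  | cast j =>
    induction i using Fin.lastCases with
    | last => exact absurd hij (Fin.castSucc_lt_last j).not_ge
    | cast i => simpa using hl (Fin.castSucc_le_castSucc_iff.1 hij)

lemma StrictMono.antitone_comp_iff {α β γ : Type*} [Preorder α] [LinearOrder β] [Preorder γ]
    {f : β → γ} (hf : StrictMono f) {g : α → β} : Antitone (f ∘ g) ↔ Antitone g :=
  forall₂_congr fun _ _ => imp_congr_right fun _ => hf.le_iff_le

def boundedPartitions (n m : ℕ) : Finset (Fin n → Fin (m + 1)) :=
  univ.filter fun l => ∀ i j : Fin n, i ≤ j → (l j : ℕ) ≤ (l i : ℕ)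

lemma mem_boundedPartitions {n m : ℕ} {l : Fin n → Fin (m + 1)} :
    l ∈ boundedPartitions n m ↔ Antitone l := by
  simp only [boundedPartitions, mem_filter, mem_univ, true_and]
  rfl

noncomputable def partitionGF (n m : ℕ) : RatFunc ℚ :=
  ∑ l ∈ boundedPartitions n m, qq ^ ∑ i, (l i : ℕ)

lemma partitionGF_zero_left (m : ℕ) : partitionGF 0 m = 1 := by
  simp [partitionGF, boundedPartitions]

lemma partitionGF_zero_right (n : ℕ) : partitionGF n 0 = 1 := by
  simp [partitionGF, boundedPartitions]

lemma sum_filter_last_eq_zero (n m : ℕ) :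
    ∑ l ∈ (boundedPartitions (n + 1) m).filter (fun l => l (Fin.last n) = 0),
      qq ^ ∑ i, (l i : ℕ) = partitionGF n m := by
  refine sum_nbij' Fin.init (fun l => Fin.snoc l 0) ?_ ?_ ?_ ?_ ?_
  · intro l hl
    simp only [mem_filter, mem_boundedPartitions] at hl
    exact mem_boundedPartitions.2 (hl.1.comp_monotone Fin.strictMono_castSucc.monotone)
  · intro l hl
    simp only [mem_filter, mem_boundedPartitions] at hl ⊢
    exact ⟨hl.snoc fun i => Fin.zero_le _, Fin.snoc_last _ _⟩
  · intro l hl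
    simp only [mem_filter] at hl
    rw [← hl.2, Fin.snoc_init_self]
  · intro l _
    exact Fin.init_snoc _ _
  · intro l hl
    simp only [mem_filter] at hl
    rw [Fin.sum_univ_castSucc, hl.2]
    rfl

lemma sum_filter_last_ne_zero (n m : ℕ) :
    ∑ l ∈ (boundedPartitions (n + 1) (m + 1)).filter (fun l => l (Fin.last n) ≠ 0),
      qq ^ ∑ i, (l i : ℕ) = qq ^ (n + 1) * partitionGF (n + 1) m := by
  rw [partitionGF, mul_sum]
  symm
  refine sum_nbij (fun l => Fin.succ ∘ l) ?_ ?_ ?_ ?_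
  · intro l hl
    simp only [mem_boundedPartitions, mem_filter] at hl ⊢
    exact ⟨Fin.strictMono_succ.antitone_comp_iff.2 hl, Fin.succ_ne_zero _⟩
  · intro l _ l' _ h
    exact (Fin.succ_injective _).comp_left h
  · intro l hl
    simp only [coe_filter, mem_boundedPartitions, Set.mem_ofPred_eq] at hl
    have hpos : ∀ i, l i ≠ 0 := fun i h =>
      hl.2 (le_antisymm (h ▸ hl.1 (Fin.le_last i)) (Fin.zero_le _))
    refine ⟨fun i => (l i).pred (hpos i), ?_, funext fun i => Fin.succ_pred _ _⟩
    rw [mem_coe, mem_boundedPartitions, ← Fin.strictMono_succ.antitone_comp_iff]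
    simpa [Function.comp_def] using hl.1
  · intro l _
    rw [← pow_add]
    simp [sum_add_distrib, add_comm]

lemma partitionGF_succ_succ (n m : ℕ) :
    partitionGF (n + 1) (m + 1) = partitionGF n (m + 1) + qq ^ (n + 1) * partitionGF (n + 1) m := by
  rw [partitionGF, ← sum_filter_add_sum_filter_not _ (fun l => l (Fin.last n) = 0),
    sum_filter_last_eq_zero, sum_filter_last_ne_zero]

theorem partitionGF_eq_qBinomial : ∀ n m, partitionGF n m = qBinomial n m
  | 0, m => by rw [partitionGF_zero_left, qBinomial_zero_left]
  | n + 1, 0 => by rw [partitionGF_zero_right, qBinomial_zero_right]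
  | n + 1, m + 1 => by
    rw [partitionGF_succ_succ, qBinomial_succ_succ, partitionGF_eq_qBinomial n (m + 1),
      partitionGF_eq_qBinomial (n + 1) m]

/-- The generating function of partitions in `P_{n,m}` (weakly decreasing
sequences `λ : Fin n → {0,…,m}`), weighted by `q^{|λ|}`, equals the Gaussian
binomial coefficient `[n+m choose n]_q = (q)_{n+m} / ((q)_n (q)_m)`. -/
theorem partition_gf_eq_gaussian_binomial (n m : ℕ) :
    ∑ l ∈ Finset.univ.filter
        (fun l : Fin n → Fin (m + 1) => ∀ i j : Fin n, i ≤ j → (l j : ℕ) ≤ (l i : ℕ)),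
      qq ^ (∑ i : Fin n, (l i : ℕ)) =
    qp (n + m) / (qp n * qp m) :=
  partitionGF_eq_qBinomial n m
end

section
/- For L > 0 the q-trinomial coefficient satisfies the recurrence T(n,d,L) = q^{L-d} T(n+1, d-1, L-1) + T(n, d, L-1) + q^{L+d-n} T(n, d+1, L-1). -/
/-- `(q)_n` for an integer index, declared to be `0` for negative `n`
(so that terms with a negative factorial index vanish upon division). -/
noncomputable def qpz (n : ℤ) : RatFunc ℚ := if 0 ≤ n then qp n.toNat else 0

/-- The Andrews–Baxter `q`-trinomial coefficient
`T(n,d,L) = Σ_k q^{k(k+d-n)} (q)_L / ((q)_k (q)_{k+d} (q)_{L-2k-d})`,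
where terms with a negative factorial index are zero.  (Any term with a
nonzero contribution has `k ≤ L`, so the range below suffices.) -/
noncomputable def qT (n d : ℤ) (L : ℕ) : RatFunc ℚ :=
  ∑ k ∈ Finset.range (L + 1),
    qq ^ ((k : ℤ) * ((k : ℤ) + d - n)) * qp L /
      (qp k * qpz ((k : ℤ) + d) * qpz ((L : ℤ) - 2 * k - d))

/-!
Each summand of `T(n,d,L)` is `q^{k(k+d-n)} [L; k, k+d, L-2k-d]_q`. Splitting
`1 - q^{a+b+c} = (1 - q^c) + q^c (1 - q^b) + q^{b+c} (1 - q^a)` gives the `q`-Pascal rule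
`[a+b+c; a,b,c] = q^{b+c} [..; a-1,b,c] + q^c [..; a,b-1,c] + [..; a,b,c-1]`, and applied to the
`k`-th summand its three parts are the `k`-th summands of `T(n+1,d-1,L-1)` and `T(n,d,L-1)` and
the `(k-1)`-st summand of `T(n,d+1,L-1)`, with exactly the powers of `q` of the recurrence.
Because `1/(q)_{x-1} = (1 - q^x)/(q)_x` holds for every integer `x` once `1/(q)_{-1} = 0`, the
Pascal rule needs no boundary cases.
-/

open Finset

lemma qq_ne_zero : qq ≠ 0 := RatFunc.X_ne_zero

lemma one_sub_qq_zpow_ne_zero {x : ℤ} (hx : 0 < x) : 1 - qq ^ x ≠ 0 := by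
  lift x to ℕ using hx.le
  rw [zpow_natCast, sub_ne_zero, ne_comm]
  intro h
  have := congrArg RatFunc.intDegree h
  rw [qq, ← RatFunc.algebraMap_X, ← map_pow, RatFunc.intDegree_polynomial,
    Polynomial.natDegree_X_pow, RatFunc.intDegree_one] at this
  omega

lemma qpz_natCast (k : ℕ) : qpz k = qp k := by simp [qpz]

lemma qpz_of_neg {x : ℤ} (hx : x < 0) : qpz x = 0 := if_neg hx.not_ge

lemma qpz_eq_qpz_sub_one_mul {x : ℤ} (hx : 0 < x) : qpz x = qpz (x - 1) * (1 - qq ^ x) := by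
  lift x to ℕ using hx.le
  obtain ⟨m, rfl⟩ := Nat.exists_eq_add_one_of_ne_zero (by omega : x ≠ 0)
  push_cast
  rw [add_sub_cancel_right, ← Nat.cast_add_one, qpz_natCast, qpz_natCast, qp, qp,
    prod_range_succ, zpow_natCast]

lemma inv_qpz_sub_one (x : ℤ) : (qpz (x - 1))⁻¹ = (1 - qq ^ x) * (qpz x)⁻¹ := by
  rcases lt_or_ge 0 x with hx | hx
  · rw [qpz_eq_qpz_sub_one_mul hx, mul_inv, mul_left_comm,
      mul_inv_cancel₀ (one_sub_qq_zpow_ne_zero hx), mul_one]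
  rcases hx.lt_or_eq with hx | rfl
  · rw [qpz_of_neg hx, qpz_of_neg (by omega)]; simp
  · rw [qpz_of_neg (by omega)]; simp

lemma one_sub_qq_zpow_add (a b c : ℤ) :
    1 - qq ^ (a + b + c) = (1 - qq ^ c) + qq ^ c * (1 - qq ^ b) + qq ^ (b + c) * (1 - qq ^ a) := by
  rw [zpow_add₀ qq_ne_zero, zpow_add₀ qq_ne_zero, zpow_add₀ qq_ne_zero]
  ring

/-- The `q`-multinomial coefficient `[a+b+c; a, b, c]_q`, which vanishes as soon as an index is
negative. -/
noncomputable def qMultinomial (a b c : ℤ) : RatFunc ℚ :=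
  qpz (a + b + c) / (qpz a * qpz b * qpz c)

lemma qMultinomial_eq_zero {a b c : ℤ} (h : a < 0 ∨ b < 0 ∨ c < 0) :
    qMultinomial a b c = 0 := by
  rcases h with h | h | h <;> simp [qMultinomial, qpz_of_neg h]

lemma qMultinomial_pascal {a b c : ℤ} (h : 0 < a + b + c) :
    qMultinomial a b c = qq ^ (b + c) * qMultinomial (a - 1) b c +
      qq ^ c * qMultinomial a (b - 1) c + qMultinomial a b (c - 1) := by
  simp only [qMultinomial, div_eq_mul_inv, mul_inv, inv_qpz_sub_one]
  rw [show a - 1 + b + c = a + b + c - 1 by ring, show a + (b - 1) + c = a + b + c - 1 by ring,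
    show a + b + (c - 1) = a + b + c - 1 by ring, qpz_eq_qpz_sub_one_mul h, one_sub_qq_zpow_add]
  ring

noncomputable def qTrinomialTerm (n d L k : ℤ) : RatFunc ℚ :=
  qq ^ (k * (k + d - n)) * qMultinomial k (k + d) (L - 2 * k - d)

lemma qTrinomialTerm_pascal (n d k : ℤ) {L : ℤ} (hL : 0 < L) :
    qTrinomialTerm n d L k =
      qq ^ (L - d) * qTrinomialTerm (n + 1) (d - 1) (L - 1) k + qTrinomialTerm n d (L - 1) k +
        qq ^ (L + d - n) * qTrinomialTerm n (d + 1) (L - 1) (k - 1) := by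
  rw [qTrinomialTerm, qMultinomial_pascal (by linarith)]
  simp only [qTrinomialTerm, mul_add, ← mul_assoc, ← zpow_add₀ qq_ne_zero]
  ring_nf

lemma qTrinomialTerm_of_neg (n d L : ℤ) {k : ℤ} (hk : k < 0) : qTrinomialTerm n d L k = 0 := by
  rw [qTrinomialTerm, qMultinomial_eq_zero (Or.inl hk), mul_zero]

lemma qTrinomialTerm_of_lt (n d : ℤ) {L k : ℤ} (hk : L < k) : qTrinomialTerm n d L k = 0 := by
  rw [qTrinomialTerm, qMultinomial_eq_zero (by omega), mul_zero]

lemma qT_eq_sum_qTrinomialTerm (n d : ℤ) (L : ℕ) :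
    qT n d L = ∑ k ∈ range (L + 1), qTrinomialTerm n d L k := by
  refine sum_congr rfl fun k _ => ?_
  rw [qTrinomialTerm, qMultinomial, mul_div_assoc, qpz_natCast,
    show (k : ℤ) + (k + d) + (L - 2 * k - d) = L by ring, qpz_natCast]

lemma qT_eq_sum_range_of_lt (n d : ℤ) {L N : ℕ} (h : L < N) :
    qT n d L = ∑ k ∈ range N, qTrinomialTerm n d L k := by
  rw [qT_eq_sum_qTrinomialTerm]
  refine sum_subset (range_subset_range.2 (by omega)) fun k _ hk => qTrinomialTerm_of_lt n d ?_
  simp only [mem_range] at hk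
  omega

lemma qT_eq_sum_range_shift (n d : ℤ) {L N : ℕ} (h : L < N) :
    qT n d L = ∑ k ∈ range (N + 1), qTrinomialTerm n d L (k - 1) := by
  rw [sum_range_succ', qT_eq_sum_range_of_lt n d h]
  simp [qTrinomialTerm_of_neg]

/-- For `L > 0`:
`T(n,d,L) = q^{L-d} T(n+1,d-1,L-1) + T(n,d,L-1) + q^{L+d-n} T(n,d+1,L-1)`. -/
theorem qT_recurrence₁ (n d : ℤ) (L : ℕ) (hL : 0 < L) :
    qT n d L =
      qq ^ ((L : ℤ) - d) * qT (n + 1) (d - 1) (L - 1) + qT n d (L - 1) +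
        qq ^ ((L : ℤ) + d - n) * qT n (d + 1) (L - 1) := by
  have hL' : L - 1 < L := Nat.sub_lt hL one_pos
  have hL'' : L - 1 < L + 1 := hL'.trans L.lt_succ_self
  rw [qT_eq_sum_qTrinomialTerm n d L, qT_eq_sum_range_of_lt (n + 1) (d - 1) hL'',
    qT_eq_sum_range_of_lt n d hL'', qT_eq_sum_range_shift n (d + 1) hL',
    mul_sum, mul_sum, ← sum_add_distrib, ← sum_add_distrib]
  refine sum_congr rfl fun k _ => ?_
  rw [Nat.cast_pred hL]
  exact qTrinomialTerm_pascal n d k (Nat.cast_pos.2 hL)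
end

section
/- As formal power series in q, the limit of the q-trinomial coefficient T(1, d, L) as L → ∞ equals (1 + q^d)/(q)_∞, for every fixed integer d ≥ 0. -/
open PowerSeries

/-- `(q)_n = ∏_{i=1}^n (1 - q^i)` as a formal power series in `q = X`. -/
noncomputable def qpPS (n : ℕ) : PowerSeries ℚ :=
  ∏ i ∈ Finset.range n, (1 - (X : PowerSeries ℚ) ^ (i + 1))

/-- `(q)_n` for an integer index, `0` for negative `n`. -/
noncomputable def qpzPS (n : ℤ) : PowerSeries ℚ :=
  if 0 ≤ n then qpPS n.toNat else 0

/-- The Andrews–Baxter `q`-trinomial coefficient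
`T(n,d,L) = Σ_k q^{k(k+d-n)} (q)_L / ((q)_k (q)_{k+d} (q)_{L-2k-d})`
as a formal power series (all exponents occurring here are nonnegative
for the instances `n ∈ {0,1}`, `d ≥ 0` used below); terms with a negative
factorial index vanish, since the inverse of `0` is `0`. -/
noncomputable def qTps (n d : ℤ) (L : ℕ) : PowerSeries ℚ :=
  ∑ k ∈ Finset.range (L + 1),
    (X : PowerSeries ℚ) ^ ((k : ℤ) * ((k : ℤ) + d - n)).toNat * qpPS L *
      (qpPS k * qpzPS ((k : ℤ) + d) * qpzPS ((L : ℤ) - 2 * k - d))⁻¹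

/-!
Modulo `X ^ (N + 1)`, the factor `(q)_L / (q)_{L-2k-d}` of the `k`-th summand of `T(n,d,L)` is `1`
once `L - 2k - d > N`, and the summands with `k > N + n` vanish; so for large `L` the trinomial is
congruent to the finite sum `Σ_{k ≤ N+n} q^{k(k+d-n)} / ((q)_k (q)_{k+d})`.

For `n = 0` these sums `A(d)` obey `A(d) = q^{d+1} A(d+2) + (1 - q^{d+1}) A(d+1)`, from splitting
`1 - q^{k+d+1} = (1 - q^k) + q^k (1 - q^{d+1})`. For `d > N` only the summand `k = 0`, which is
`1/(q)_d`, survives, so `A(d) ≡ 1/(q)_∞`; descending induction on `d` extends this to every `d`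
(the Durfee rectangle identity). Finally `T(1,d) = T(0,d-1) + q^d T(0,d)` summand by summand.
-/

section ModXPow

variable {R : Type*} [CommRing R]

noncomputable abbrev modXPow (n : ℕ) : R⟦X⟧ →+* R⟦X⟧ ⧸ Ideal.span {(X : R⟦X⟧) ^ n} :=
  Ideal.Quotient.mk _

theorem modXPow_eq_zero_of_dvd {n : ℕ} {a : R⟦X⟧} (h : X ^ n ∣ a) : modXPow n a = 0 :=
  Ideal.Quotient.eq_zero_iff_mem.mpr (Ideal.mem_span_singleton.mpr h)

theorem coeff_eq_of_modXPow_eq {N : ℕ} {a b : R⟦X⟧}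
    (h : modXPow (N + 1) a = modXPow (N + 1) b) : coeff N a = coeff N b := by
  rw [Ideal.Quotient.eq, Ideal.mem_span_singleton] at h
  rw [← sub_eq_zero, ← map_sub]
  exact X_pow_dvd_iff.mp h N N.lt_succ_self

theorem modXPow_one_sub_X_pow {n i : ℕ} (h : n ≤ i) : modXPow n (1 - X ^ i : R⟦X⟧) = 1 := by
  rw [map_sub, map_one, modXPow_eq_zero_of_dvd (pow_dvd_pow X h), sub_zero]

theorem modXPow_inv_eq_inv {k : Type*} [Field k] {n : ℕ} {a b : k⟦X⟧}
    (ha : constantCoeff a ≠ 0) (hb : constantCoeff b ≠ 0) (h : modXPow n a = modXPow n b) :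
    modXPow n a⁻¹ = modXPow n b⁻¹ := by
  have ha' := congrArg (modXPow n) (PowerSeries.mul_inv_cancel a ha)
  have hb' := congrArg (modXPow n) (PowerSeries.mul_inv_cancel b hb)
  rw [map_mul, map_one] at ha' hb'
  linear_combination modXPow n b⁻¹ * ha' - modXPow n a⁻¹ * hb' -
    modXPow n a⁻¹ * modXPow n b⁻¹ * h

end ModXPow

open Finset

theorem constantCoeff_qpPS_ne_zero (m : ℕ) : constantCoeff (qpPS m) ≠ 0 := by
  simp [qpPS, map_prod]

theorem qpPS_zero : qpPS 0 = 1 := prod_range_zero _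

theorem qpPS_succ (m : ℕ) : qpPS (m + 1) = qpPS m * (1 - X ^ (m + 1)) := prod_range_succ _ m

theorem qpzPS_natCast (m : ℕ) : qpzPS m = qpPS m := by simp [qpzPS]

theorem qpPS_inv_eq_mul_qpPS_succ_inv (m : ℕ) :
    (qpPS m)⁻¹ = (1 - X ^ (m + 1)) * (qpPS (m + 1))⁻¹ := by
  have hX : constantCoeff (1 - X ^ (m + 1) : ℚ⟦X⟧) ≠ 0 := by simp
  rw [qpPS_succ, PowerSeries.mul_inv_rev, ← mul_assoc, PowerSeries.mul_inv_cancel _ hX, one_mul]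

theorem modXPow_qpPS_of_le {n m M : ℕ} (hnm : n ≤ m) (hmM : m ≤ M) :
    modXPow n (qpPS M) = modXPow n (qpPS m) := by
  have hIco : ∏ i ∈ Ico m M, modXPow n (1 - X ^ (i + 1) : ℚ⟦X⟧) = 1 :=
    prod_eq_one fun i hi => modXPow_one_sub_X_pow (by grind)
  rw [qpPS, qpPS, ← prod_range_mul_prod_Ico _ hmM, map_mul, map_prod (modXPow n) _ (Ico m M),
    hIco, mul_one]

theorem modXPow_qpPS_inv_of_le {n m M : ℕ} (hnm : n ≤ m) (hmM : m ≤ M) :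
    modXPow n (qpPS M)⁻¹ = modXPow n (qpPS m)⁻¹ :=
  modXPow_inv_eq_inv (constantCoeff_qpPS_ne_zero M) (constantCoeff_qpPS_ne_zero m)
    (modXPow_qpPS_of_le hnm hmM)

/-- The `k`-th summand of `lim_{L → ∞} qTps n e L`. -/
noncomputable def qTlimTerm (n e k : ℕ) : ℚ⟦X⟧ :=
  X ^ (k * (k + e - n)) * ((qpPS k)⁻¹ * (qpPS (k + e))⁻¹)

noncomputable def qTlimSum (n e K : ℕ) : ℚ⟦X⟧ :=
  ∑ k ∈ range K, qTlimTerm n e k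

theorem qTlimTerm_zero_right (n e : ℕ) : qTlimTerm n e 0 = (qpPS e)⁻¹ := by
  simp [qTlimTerm, qpPS_zero]

theorem X_pow_dvd_qTlimTerm {m n e k : ℕ} (h : m ≤ k * (k + e - n)) :
    X ^ m ∣ qTlimTerm n e k :=
  (pow_dvd_pow X h).mul_right _

theorem add_one_le_mul_add_sub {N n e k : ℕ} (hk : N + n + 1 ≤ k) : N + 1 ≤ k * (k + e - n) :=
  calc N + 1 ≤ k + e - n := by omega
    _ ≤ k * (k + e - n) := Nat.le_mul_of_pos_left _ (by omega)

theorem modXPow_qTlimSum_of_le {N n e K₀ K : ℕ} (hK₀ : N + n + 1 ≤ K₀) (hK : K₀ ≤ K) :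
    modXPow (N + 1) (qTlimSum n e K) = modXPow (N + 1) (qTlimSum n e K₀) := by
  induction K, hK using Nat.le_induction with
  | base => rfl
  | succ K hK ih =>
    have hvanish : modXPow (N + 1) (qTlimTerm n e K) = 0 :=
      modXPow_eq_zero_of_dvd (X_pow_dvd_qTlimTerm (add_one_le_mul_add_sub (by omega)))
    rw [qTlimSum, sum_range_succ, map_add, hvanish, add_zero, ← qTlimSum, ih]

theorem qTlimTerm_zero_succ (e k : ℕ) :
    qTlimTerm 0 e (k + 1) =
      X ^ (e + 1) * qTlimTerm 0 (e + 2) k + (1 - X ^ (e + 1)) * qTlimTerm 0 (e + 1) (k + 1) := by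
  simp only [qTlimTerm, Nat.sub_zero]
  rw [qpPS_inv_eq_mul_qpPS_succ_inv k, qpPS_inv_eq_mul_qpPS_succ_inv (k + 1 + e)]
  ring_nf

theorem qTlimSum_zero_succ (e K : ℕ) :
    qTlimSum 0 e (K + 1) =
      X ^ (e + 1) * qTlimSum 0 (e + 2) K + (1 - X ^ (e + 1)) * qTlimSum 0 (e + 1) (K + 1) := by
  have h0 : qTlimTerm 0 e 0 = (1 - X ^ (e + 1)) * qTlimTerm 0 (e + 1) 0 := by
    rw [qTlimTerm_zero_right, qTlimTerm_zero_right, qpPS_inv_eq_mul_qpPS_succ_inv]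
  simp only [qTlimSum, sum_range_succ' _ K, h0]
  rw [sum_congr rfl fun k _ => qTlimTerm_zero_succ e k, sum_add_distrib, ← mul_sum, ← mul_sum]
  ring

theorem modXPow_qTlimSum_zero_self_of_le {N e : ℕ} (he : N + 1 ≤ e) :
    modXPow (N + 1) (qTlimSum 0 e (N + 1)) = modXPow (N + 1) (qpPS (N + 1))⁻¹ := by
  have hvanish : ∀ k ∈ range N, modXPow (N + 1) (qTlimTerm 0 e (k + 1)) = 0 := fun k _ =>
    modXPow_eq_zero_of_dvd <| X_pow_dvd_qTlimTerm <|
      he.trans <| (Nat.le_add_left e (k + 1)).trans (Nat.le_mul_of_pos_left _ k.succ_pos)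
  rw [qTlimSum, sum_range_succ', map_add, map_sum, sum_eq_zero hvanish, zero_add,
    qTlimTerm_zero_right, modXPow_qpPS_inv_of_le le_rfl he]

theorem modXPow_qTlimSum_zero_self (N e : ℕ) :
    modXPow (N + 1) (qTlimSum 0 e (N + 1)) = modXPow (N + 1) (qpPS (N + 1))⁻¹ := by
  suffices ∀ t e, N + 1 ≤ e + t →
      modXPow (N + 1) (qTlimSum 0 e (N + 1)) = modXPow (N + 1) (qpPS (N + 1))⁻¹ from
    this (N + 1) e (by omega)
  intro t
  induction t with
  | zero => exact fun e he => modXPow_qTlimSum_zero_self_of_le he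
  | succ t ih =>
    intro e he
    rcases le_or_gt (N + 1) e with hNe | heN
    · exact modXPow_qTlimSum_zero_self_of_le hNe
    have hstable (f : ℕ) : modXPow (N + 1) (qTlimSum 0 f (N + 1 + 1)) =
        modXPow (N + 1) (qTlimSum 0 f (N + 1)) :=
      modXPow_qTlimSum_of_le le_rfl (by omega)
    rw [← hstable, qTlimSum_zero_succ, map_add, map_mul, map_mul, hstable,
      ih (e + 1) (by omega), ih (e + 2) (by omega), map_sub, map_one]
    ring

theorem modXPow_qTlimSum_zero {N e K : ℕ} (hK : N + 1 ≤ K) :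
    modXPow (N + 1) (qTlimSum 0 e K) = modXPow (N + 1) (qpPS (N + 1))⁻¹ := by
  rw [modXPow_qTlimSum_of_le le_rfl hK, modXPow_qTlimSum_zero_self]

theorem qTlimTerm_one_succ (e k : ℕ) :
    qTlimTerm 1 (e + 1) k = qTlimTerm 0 e k + X ^ (e + 1) * qTlimTerm 0 (e + 1) k := by
  simp only [qTlimTerm, Nat.sub_zero, Nat.add_sub_cancel, ← add_assoc]
  rw [qpPS_inv_eq_mul_qpPS_succ_inv (k + e)]
  ring

theorem qTlimTerm_one_zero_succ (k : ℕ) :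
    qTlimTerm 1 0 (k + 1) = qTlimTerm 0 0 (k + 1) + qTlimTerm 0 1 k := by
  simp only [qTlimTerm, Nat.sub_zero, Nat.add_sub_cancel, add_zero]
  rw [qpPS_inv_eq_mul_qpPS_succ_inv k]
  ring

theorem qTlimSum_one_succ (e K : ℕ) :
    qTlimSum 1 (e + 1) K = qTlimSum 0 e K + X ^ (e + 1) * qTlimSum 0 (e + 1) K := by
  simp only [qTlimSum, qTlimTerm_one_succ, sum_add_distrib, mul_sum]

/-- `T(1,0) = T(0,-1) + T(0,0)`, where `T(0,-1)` is `T(0,1)` with `k` shifted by one. -/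
theorem qTlimSum_one_zero (K : ℕ) :
    qTlimSum 1 0 (K + 1) = qTlimSum 0 0 (K + 1) + qTlimSum 0 1 K := by
  have h0 : qTlimTerm 1 0 0 = qTlimTerm 0 0 0 := by simp [qTlimTerm]
  simp only [qTlimSum, sum_range_succ' _ K, qTlimTerm_one_zero_succ, sum_add_distrib, h0]
  ring

theorem modXPow_qTlimSum_one (N e : ℕ) :
    modXPow (N + 1) (qTlimSum 1 e (N + 2)) =
      modXPow (N + 1) ((1 + X ^ e) * (qpPS (N + 1))⁻¹) := by
  rcases e with _ | f
  · rw [qTlimSum_one_zero, map_add, modXPow_qTlimSum_zero (by omega),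
      modXPow_qTlimSum_zero le_rfl]
    simp only [map_mul, map_add, map_one, pow_zero]
    ring
  · rw [qTlimSum_one_succ, map_add, map_mul, modXPow_qTlimSum_zero (by omega),
      modXPow_qTlimSum_zero (by omega)]
    simp only [map_mul, map_add, map_one]
    ring

theorem toNat_natCast_mul_add_sub (n e k : ℕ) :
    ((k : ℤ) * ((k : ℤ) + e - n)).toNat = k * (k + e - n) := by
  rcases le_or_gt n (k + e) with h | h
  · rw [show (k : ℤ) * (k + e - n) = ((k * (k + e - n) : ℕ) : ℤ) by push_cast [Nat.cast_sub h]; ring,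
      Int.toNat_natCast]
  · rw [Nat.sub_eq_zero_of_le h.le, mul_zero, Int.toNat_eq_zero]
    exact mul_nonpos_of_nonneg_of_nonpos (by positivity) (by omega)

theorem modXPow_qTps_summand {N n e L k : ℕ} (hL : N + 1 + 2 * k + e ≤ L) :
    modXPow (N + 1) (X ^ ((k : ℤ) * ((k : ℤ) + e - n)).toNat * qpPS L *
      (qpPS k * qpzPS ((k : ℤ) + e) * qpzPS ((L : ℤ) - 2 * k - e))⁻¹) =
      modXPow (N + 1) (qTlimTerm n e k) := by
  have hM : (L : ℤ) - 2 * k - e = ((L - 2 * k - e : ℕ) : ℤ) := by omega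
  have hcancel : modXPow (N + 1) (qpPS L) * modXPow (N + 1) (qpPS (L - 2 * k - e))⁻¹ = 1 := by
    rw [modXPow_qpPS_of_le (m := L - 2 * k - e) (by omega) (by omega), ← map_mul,
      PowerSeries.mul_inv_cancel _ (constantCoeff_qpPS_ne_zero _), map_one]
  rw [toNat_natCast_mul_add_sub, ← Nat.cast_add, hM, qpzPS_natCast, qpzPS_natCast,
    PowerSeries.mul_inv_rev, PowerSeries.mul_inv_rev, qTlimTerm]
  simp only [map_mul]
  linear_combination (modXPow (N + 1) (X ^ (k * (k + e - n))) *
    modXPow (N + 1) (qpPS (k + e))⁻¹ * modXPow (N + 1) (qpPS k)⁻¹) * hcancel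

theorem modXPow_qTps (N n e L : ℕ) (hL : 3 * (N + n + 1) + e ≤ L) :
    modXPow (N + 1) (qTps n e L) = modXPow (N + 1) (qTlimSum n e (N + n + 1)) := by
  have hK : N + n + 1 ≤ L + 1 := by omega
  rw [qTps, ← sum_range_add_sum_Ico _ hK, map_add, map_sum, map_sum, qTlimSum, map_sum,
    sum_eq_zero (s := Ico _ _), add_zero]
  · exact sum_congr rfl fun k hk => modXPow_qTps_summand (by grind)
  · intro k hk
    refine modXPow_eq_zero_of_dvd <|
      dvd_mul_of_dvd_left (dvd_mul_of_dvd_left (pow_dvd_pow X ?_) _) _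
    rw [toNat_natCast_mul_add_sub]
    exact add_one_le_mul_add_sub (mem_Ico.mp hk).1

/-- The `N`-th coefficient of `1/(q)_∞` is that of `1/(q)_M` for any `M ≥ N` (here `M = N+1`). -/
theorem qT_one_limit (d : ℤ) (hd : 0 ≤ d) :
    ∀ N : ℕ, ∃ L0 : ℕ, ∀ L : ℕ, L0 ≤ L →
      PowerSeries.coeff N (qTps 1 d L) =
        PowerSeries.coeff N ((1 + (X : PowerSeries ℚ) ^ d.toNat) * (qpPS (N + 1))⁻¹) := by
  intro N
  lift d to ℕ using hd
  refine ⟨3 * (N + 2) + d, fun L hL => coeff_eq_of_modXPow_eq ?_⟩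
  rw [Int.toNat_natCast, ← modXPow_qTlimSum_one]
  exact_mod_cast modXPow_qTps N 1 d L hL
end

section
/- Let h and h' be ABF paths of the same length L, equal at all positions 0 ≤ i ≤ L, with the same boundary parameter f, where h has presegment parameter e = 0 and h' has e = 1 (i.e. h_{-1} = h_0 + 1 and h'_{-1} = h'_0 − 1). Then w(h) = w(h'). Moreover, if h_L = 1 and paths h^{(e,1)}, h^{(e,0)} agree on positions 0 ≤ i ≤ L but have f = 1 and f = 0 respectively, then w(h^{(e,1)}) = w(h^{(e,0)}) + L/2. -/
/-- The weight `w(h) = (1/4) Σ_{i=1}^L i·|h_{i+1} − h_{i-1}|` of an ABF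
path of length `L` (the path is the restriction of `h : ℤ → ℤ` to
positions `-1, 0, …, L+1`). -/
def abfWeight (L : ℕ) (h : ℤ → ℤ) : ℚ :=
  (1 / 4 : ℚ) * ∑ i ∈ Finset.Icc 1 L, (i : ℚ) * ((h ((i : ℤ) + 1) - h ((i : ℤ) - 1)).natAbs : ℚ)

/-- The ABF step condition for `h` restricted to positions `-1, …, L+1`:
`|h_i − h_{i-1}| = 1` for `0 ≤ i ≤ L+1`. -/
def abfSteps (L : ℕ) (h : ℤ → ℤ) : Prop :=
  ∀ i : ℤ, 0 ≤ i → i ≤ (L : ℤ) + 1 → (h i - h (i - 1)).natAbs = 1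

/-! The weight never looks at `h_{-1}`, since the sum starts at `i = 1`; so the presegment
parameter `e` is invisible to it. Changing `f` only affects the last summand
`L·|h_{L+1} − h_{L-1}|/4`: when `h_L = 1` the band forces `h_{L-1} = 2`, so this summand is
`L·2/4` for `f = 1` and `0` for `f = 0`. -/

theorem abfWeight_congr {L : ℕ} {h h' : ℤ → ℤ}
    (heq : ∀ i : ℤ, 0 ≤ i → i ≤ (L : ℤ) + 1 → h i = h' i) :
    abfWeight L h = abfWeight L h' := by
  unfold abfWeight
  congr 1
  refine Finset.sum_congr rfl fun i hi => ?_
  obtain ⟨hi1, hiL⟩ := Finset.mem_Icc.mp hi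
  rw [heq (i - 1) (by omega) (by omega), heq (i + 1) (by omega) (by omega)]

theorem abfWeight_succ (n : ℕ) (h : ℤ → ℤ) :
    abfWeight (n + 1) h =
      abfWeight n h + ((n : ℚ) + 1) / 4 * ((h ((n : ℤ) + 2) - h n).natAbs : ℚ) := by
  unfold abfWeight
  rw [Finset.sum_Icc_succ_top (by omega)]
  push_cast
  ring_nf

/-- (1)  Changing the presegment parameter from `e = 0` (so `h_{-1} = h_0 + 1`)
to `e = 1` (so `h'_{-1} = h'_0 − 1`) does not change the weight of an ABF
path: if `h` and `h'` agree at positions `0, …, L` and have the same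
postsegment (`h_{L+1} = h'_{L+1}`), then `w(h) = w(h')`.
(2)  If `h_L = 1` within the `(1,p)`-restricted band and the two paths
`h^{(e,1)}`, `h^{(e,0)}` agree on positions `0, …, L` but have `f = 1`
(`h_{L+1} = h_L − 1`) and `f = 0` (`h_{L+1} = h_L + 1`) respectively, then
`w(h^{(e,1)}) = w(h^{(e,0)}) + L/2`. -/
theorem abfWeight_presegment_and_b_one :
    (∀ (L : ℕ) (h h' : ℤ → ℤ), abfSteps L h → abfSteps L h' →
        (∀ i : ℤ, 0 ≤ i → i ≤ (L : ℤ) → h i = h' i) →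
        h (-1) = h 0 + 1 → h' (-1) = h' 0 - 1 →
        h ((L : ℤ) + 1) = h' ((L : ℤ) + 1) →
        abfWeight L h = abfWeight L h') ∧
    (∀ (p L : ℕ) (h h' : ℤ → ℤ), abfSteps L h → abfSteps L h' →
        (∀ i : ℤ, 0 ≤ i → i ≤ (L : ℤ) → 1 ≤ h i ∧ h i ≤ (p : ℤ)) →
        (∀ i : ℤ, 0 ≤ i → i ≤ (L : ℤ) → h i = h' i) →
        h (L : ℤ) = 1 →
        h ((L : ℤ) + 1) = h (L : ℤ) - 1 →
        h' ((L : ℤ) + 1) = h' (L : ℤ) + 1 →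
        abfWeight L h = abfWeight L h' + (L : ℚ) / 2) := by
  refine ⟨fun L h h' _ _ agree _ _ hend => abfWeight_congr fun i hi0 hiL => ?_,
    fun p L h h' steps _ band agree hL hf hf' => ?_⟩
  · rcases hiL.lt_or_eq with hlt | rfl
    · exact agree i hi0 (by omega)
    · exact hend
  cases L with
  | zero => simp [abfWeight]
  | succ n =>
    push_cast at hL hf hf' agree
    have h_before : h n = 2 := by
      have hstep := steps (n + 1) (by omega) (by omega)
      have hpos := (band n (by omega) (by omega)).1
      rw [add_sub_cancel_right, hL] at hstep
      omega
    have h'_before : h' n = 2 := agree n (by omega) (by omega) ▸ h_before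
    have h'_end : h' (n + 1) = 1 := agree (n + 1) (by omega) (by omega) ▸ hL
    rw [abfWeight_succ, abfWeight_succ, abfWeight_congr (h' := h') fun i hi0 hiL => agree i hi0 hiL,
      show (n : ℤ) + 2 = n + 1 + 1 by ring, hf, hf', hL, h'_end, h_before, h'_before]
    push_cast
    ring
end
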